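/- Let Π be a hierarchical partition system on X. Then there is a vertex ρ of the weak X-tree T_Π such that d_{T_Π}(ρ, u) = |Π| for every leaf u of T_Π, where |Π| is the total multiset size of Π. -/

import Mathlib

open scoped Classical

/-- A weak X-tree: a finite tree together with a labelling map `lab : X → V`
such that every degree-one vertex (i.e. vertex with a unique neighbour) is labelled. -/
structure WeakXTree (X : Type) [Fintype X] [DecidableEq X] where
  V : Type
  [fintypeV : Fintype V]
  [decEqV : DecidableEq V]
  G : SimpleGraph V
  isTree : G.IsTree
  lab : X → V
  leaf_labelled : ∀ v : V, (∃! w : V, G.Adj v w) → v ∈ Set.range lab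

attribute [instance] WeakXTree.fintypeV WeakXTree.decEqV

variable {X : Type} [Fintype X] [DecidableEq X]

namespace WeakXTree

/-- A leaf is a vertex with a unique neighbour (degree one). -/
def IsLeaf (T : WeakXTree X) (v : T.V) : Prop := ∃! w : T.V, T.G.Adj v w

/-- The split of `X` displayed by an edge `e` of the tree: the (two) sets
`φ⁻¹(V₁)`, `φ⁻¹(V₂)` where `V₁, V₂` are the components of `T ∖ e`. -/
noncomputable def splitOf (T : WeakXTree X) (e : Sym2 T.V) : Finset (Finset X) :=
  Finset.image (fun u : T.V =>
    Finset.univ.filter (fun x : X => (T.G.deleteEdges {e}).Reachable u (T.lab x)))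
    Finset.univ

/-- The multiset of splits displayed by the edges of a weak X-tree. -/
noncomputable def splits (T : WeakXTree X) : Multiset (Finset (Finset X)) :=
  T.G.edgeFinset.val.map T.splitOf

end WeakXTree

/-- A partition of `X`: nonempty parts, every element of `X` in exactly one part. -/
def IsPartition (π : Finset (Finset X)) : Prop :=
  (∀ A ∈ π, A.Nonempty) ∧ ∀ x : X, ∃! A : Finset X, A ∈ π ∧ x ∈ A

/-- A split of `X` is a partition of `X` into exactly two parts. -/
def IsSplit (σ : Finset (Finset X)) : Prop := IsPartition σ ∧ σ.card = 2

/-- A split system on `X` is a multiset of splits of `X`. -/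
def IsSplitSystem (S : Multiset (Finset (Finset X))) : Prop := ∀ σ ∈ S, IsSplit σ

/-- Two splits `{A₁,B₁}` and `{A₂,B₂}` are compatible if one of the four
intersections of a part of one with a part of the other is empty. -/
def SplitsCompatible (σ₁ σ₂ : Finset (Finset X)) : Prop :=
  ∃ A ∈ σ₁, ∃ B ∈ σ₂, A ∩ B = ∅

/-- A split system is compatible if its splits are pairwise compatible. -/
def CompatibleSystem (S : Multiset (Finset (Finset X))) : Prop :=
  ∀ σ₁ ∈ S, ∀ σ₂ ∈ S, SplitsCompatible σ₁ σ₂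

/-- A partition system on `X`: a multiset of partitions of `X` into at least two parts. -/
def IsPartitionSystem (P : Multiset (Finset (Finset X))) : Prop :=
  ∀ π ∈ P, IsPartition π ∧ 2 ≤ π.card

/-- The multiset of splits `{A, X − A}` for `A` a part of the partition `π`. -/
def partitionSplits (π : Finset (Finset X)) : Multiset (Finset (Finset X)) :=
  π.val.map (fun A => ({A, Aᶜ} : Finset (Finset X)))

/-- `Σ_Π`: the multiset union over `π ∈ Π` of the splits `{A, X − A}`, `A ∈ π`. -/
def systemSplits (P : Multiset (Finset (Finset X))) : Multiset (Finset (Finset X)) :=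
  P.bind partitionSplits

/-- A partition system is strongly compatible if any two of its partitions are
equal or have parts whose union is `X`. -/
def StronglyCompatible (P : Multiset (Finset (Finset X))) : Prop :=
  ∀ π₁ ∈ P, ∀ π₂ ∈ P, π₁ = π₂ ∨ ∃ A ∈ π₁, ∃ B ∈ π₂, A ∪ B = Finset.univ

namespace WeakXTree

/-- A weak X-tree is even if all pairwise distances between labelled vertices are even. -/
def IsEven (T : WeakXTree X) : Prop :=
  ∀ x y : X, Even (T.G.dist (T.lab x) (T.lab y))

/-- A vertex of a weak X-tree is even if it has even distance to some leaf. -/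
def EvenVertex (T : WeakXTree X) (v : T.V) : Prop :=
  ∃ l : T.V, T.IsLeaf l ∧ Even (T.G.dist v l)

/-- A set `E` of edges of `T` displays the partition `π` if there is a bijection
`ξ : π → E` with `σ_{ξ(A)} = {A, X − A}` for each part `A ∈ π`. -/
def Displays (T : WeakXTree X) (E : Finset (Sym2 T.V)) (π : Finset (Finset X)) : Prop :=
  ↑E ⊆ T.G.edgeSet ∧ ∃ ξ : Finset X → Sym2 T.V,
    Set.BijOn ξ ↑π ↑E ∧ ∀ A ∈ π, T.splitOf (ξ A) = {A, Aᶜ}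

/-- The partition `π(v)` displayed by a vertex `v`: `x` and `y` are in the same
part iff the path from `φ(x)` to `φ(y)` does not pass through `v`. -/
noncomputable def vertexPartition (T : WeakXTree X) (v : T.V) : Finset (Finset X) :=
  Finset.image (fun x : X => Finset.univ.filter (fun y : X =>
    ∀ p : T.G.Walk (T.lab x) (T.lab y), p.IsPath → v ∉ p.support)) Finset.univ

end WeakXTree

/-- A partition system is hierarchical if the collection of all parts of its
partitions is a hierarchy: any two parts are disjoint or nested. -/
def Hierarchical (P : Multiset (Finset (Finset X))) : Prop :=
  ∀ π₁ ∈ P, ∀ π₂ ∈ P, ∀ A ∈ π₁, ∀ B ∈ π₂,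
    A ∩ B = ∅ ∨ A ∩ B = A ∨ A ∩ B = B

/-!
For a vertex `v` of the tree, let `sides v` be the multiset of the sets of labels lying on `v`'s
side of each edge. Mapping `A ↦ {A, Aᶜ}` sends `sides v` to `Σ(T)` and the multiset of
complements of parts of `Π` to `Σ_Π`. If `sides ρ` equals the multiset of complements of parts,
then the edges separating `ρ` from a label `x` correspond to the parts containing `x`, one per
partition, so `d(ρ, φ(x)) = |Π|`. A vertex `ρ` maximising the overlap of `sides ρ` with the
part complements is such a vertex: an over-represented side at `ρ` can, by the hierarchy
condition, be replaced by one on an edge at `ρ`, and crossing that edge would increase the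
overlap.
-/

namespace SimpleGraph

variable {V : Type*} {G : SimpleGraph V}

lemma Walk.reachable_deleteEdges_or {u w : V} (p : G.Walk u w) (a b : V) :
    (G.deleteEdges {s(a, b)}).Reachable u w ∨ (G.deleteEdges {s(a, b)}).Reachable u a ∨
      (G.deleteEdges {s(a, b)}).Reachable u b := by
  induction p with
  | nil => exact .inl .rfl
  | @cons u c _ huc _ ih =>
    by_cases hab : s(u, c) = s(a, b)
    · rcases Sym2.eq_iff.mp hab with ⟨rfl, -⟩ | ⟨rfl, -⟩
      exacts [.inr (.inl .rfl), .inr (.inr .rfl)]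
    · have hstep : (G.deleteEdges {s(a, b)}).Adj u c := by simp [huc, hab]
      exact ih.imp (hstep.reachable.trans ·) (Or.imp (hstep.reachable.trans ·)
        (hstep.reachable.trans ·))

lemma Preconnected.reachable_deleteEdges_or (hG : G.Preconnected) (a b u : V) :
    (G.deleteEdges {s(a, b)}).Reachable u a ∨ (G.deleteEdges {s(a, b)}).Reachable u b := by
  obtain ⟨p⟩ := hG u a
  rcases p.reachable_deleteEdges_or a b with h | h | h
  exacts [.inl h, .inl h, .inr h]

lemma IsAcyclic.not_reachable_deleteEdges (hG : G.IsAcyclic) {a b : V} (hab : G.Adj a b) :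
    ¬ (G.deleteEdges {s(a, b)}).Reachable a b :=
  isBridge_iff.mp (isAcyclic_iff_forall_adj_isBridge.mp hG hab)

lemma IsAcyclic.reachable_deleteEdges_iff (hG : G.IsAcyclic) {v w : V} {p : G.Walk v w}
    (hp : p.IsPath) {e : Sym2 V} : (G.deleteEdges {e}).Reachable v w ↔ e ∉ p.edges := by
  refine ⟨fun h => ?_, fun h => ⟨p.toDeleteEdges {e} fun e' he' hmem => h (hmem ▸ he')⟩⟩
  induction e using Sym2.ind with
  | _ a b =>
    obtain ⟨q, hq⟩ := reachable_deleteEdges_iff_exists_walk.mp h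
    have : (q.toPath : G.Walk v w) = p :=
      congrArg Subtype.val ((hG.subsingleton_path v w).elim _ ⟨p, hp⟩)
    exact fun he => hq (q.edges_toPath_subset_edges (this ▸ he))

lemma IsAcyclic.not_reachable_deleteEdges_of_mem_support (hG : G.IsAcyclic) {v b y : V}
    {p : G.Walk v y} (hp : p.IsPath) (hb : b ∈ p.support) {e : Sym2 V}
    (he : ¬ (G.deleteEdges {e}).Reachable v b) : ¬ (G.deleteEdges {e}).Reachable v y := by
  rw [hG.reachable_deleteEdges_iff hp, not_not]
  exact p.edges_takeUntil_subset_edges hb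
    ((p.takeUntil b hb).mem_edges_of_not_reachable_deleteEdges he)

lemma IsAcyclic.exists_adj_not_reachable_deleteEdges (hG : G.IsAcyclic) {v b : V}
    (hvb : G.Reachable v b) (hne : v ≠ b) :
    ∃ c, G.Adj v c ∧ ¬ (G.deleteEdges {s(v, c)}).Reachable v b := by
  obtain ⟨p, hp⟩ := hvb.some.toPath
  have hnil : ¬ p.Nil := Walk.not_nil_of_ne hne
  exact ⟨p.snd, p.adj_snd hnil,
    (hG.reachable_deleteEdges_iff hp).not_left.mpr (p.mk_start_snd_mem_edges hnil)⟩

lemma IsTree.exists_eq_mk_not_reachable_deleteEdges (hG : G.IsTree) {e : Sym2 V}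
    (he : e ∈ G.edgeSet) (v : V) :
    ∃ a b, e = s(a, b) ∧ ¬ (G.deleteEdges {e}).Reachable v b := by
  induction e using Sym2.ind with
  | _ a b =>
    have hsep := hG.isAcyclic.not_reachable_deleteEdges he
    rcases hG.connected.preconnected.reachable_deleteEdges_or a b v with h | h
    · exact ⟨a, b, rfl, fun h' => hsep (h.symm.trans h')⟩
    · exact ⟨b, a, Sym2.eq_swap, fun h' => hsep (h'.symm.trans h)⟩

lemma IsTree.dist_eq_card_filter_not_reachable [Fintype G.edgeSet] (hG : G.IsTree) (v w : V) :
    G.dist v w = (G.edgeFinset.filter fun e => ¬ (G.deleteEdges {e}).Reachable v w).card := by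
  obtain ⟨p, hp, hlen⟩ := hG.connected.exists_path_of_dist v w
  have hsep : G.edgeFinset.filter (fun e => ¬ (G.deleteEdges {e}).Reachable v w) =
      p.edges.toFinset := by
    ext e
    simp only [Finset.mem_filter, mem_edgeFinset, List.mem_toFinset,
      hG.isAcyclic.reachable_deleteEdges_iff hp, not_not]
    exact ⟨And.right, fun he => ⟨p.edges_subset_edgeSet he, he⟩⟩
  rw [hsep, List.toFinset_card_of_nodup hp.isTrail.edges_nodup, Walk.length_edges, hlen]

end SimpleGraph

namespace WeakXTree

open SimpleGraph

variable (T : WeakXTree X)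

noncomputable def side (v : T.V) (e : Sym2 T.V) : Finset X :=
  Finset.univ.filter fun x => (T.G.deleteEdges {e}).Reachable v (T.lab x)

noncomputable def sides (v : T.V) : Multiset (Finset X) :=
  T.G.edgeFinset.val.map (T.side v)

variable {T}

@[simp]
lemma mem_side {v : T.V} {e : Sym2 T.V} {x : X} :
    x ∈ T.side v e ↔ (T.G.deleteEdges {e}).Reachable v (T.lab x) := by
  simp [side]

lemma side_eq_of_reachable {v w : T.V} {e : Sym2 T.V}
    (h : (T.G.deleteEdges {e}).Reachable v w) :
    T.side v e = T.side w e := by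
  ext x
  simp only [mem_side]
  exact ⟨h.symm.trans, h.trans⟩

lemma side_right_eq_compl {a b : T.V} (hab : T.G.Adj a b) :
    T.side b s(a, b) = (T.side a s(a, b))ᶜ := by
  ext x
  simp only [mem_side, Finset.mem_compl]
  refine ⟨fun hb ha => T.isTree.isAcyclic.not_reachable_deleteEdges hab (ha.trans hb.symm),
    fun ha => ?_⟩
  exact ((T.isTree.connected.preconnected.reachable_deleteEdges_or a b (T.lab x)).resolve_left
    (ha ∘ Reachable.symm)).symm

lemma side_eq_or_eq_compl {a b : T.V} (hab : T.G.Adj a b) (v : T.V) :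
    T.side v s(a, b) = T.side a s(a, b) ∨ T.side v s(a, b) = (T.side a s(a, b))ᶜ := by
  rw [← side_right_eq_compl hab]
  exact (T.isTree.connected.preconnected.reachable_deleteEdges_or a b v).imp
    side_eq_of_reachable side_eq_of_reachable

lemma splitOf_eq {a b : T.V} (hab : T.G.Adj a b) (v : T.V) :
    T.splitOf s(a, b) = {T.side v s(a, b), (T.side v s(a, b))ᶜ} := by
  have hsplit : T.splitOf s(a, b) = {T.side a s(a, b), (T.side a s(a, b))ᶜ} := by
    change Finset.univ.image (T.side · s(a, b)) = _
    ext t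
    simp only [Finset.mem_image, Finset.mem_univ, true_and, Finset.mem_insert,
      Finset.mem_singleton]
    refine ⟨fun ⟨u, hu⟩ => hu ▸ side_eq_or_eq_compl hab u, ?_⟩
    rintro (rfl | rfl)
    exacts [⟨a, rfl⟩, ⟨b, side_right_eq_compl hab⟩]
  rcases side_eq_or_eq_compl hab v with h | h <;> rw [hsplit, h]
  rw [compl_compl, Finset.pair_comm]

lemma splits_eq_map_sides (v : T.V) :
    T.splits = (T.sides v).map fun A => {A, Aᶜ} := by
  rw [splits, sides, Multiset.map_map]
  refine Multiset.map_congr rfl fun e he => ?_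
  induction e using Sym2.ind with
  | _ a b => exact splitOf_eq (by simpa using he) v

lemma sides_eq_cons {v c : T.V} (hvc : T.G.Adj v c) :
    ∃ R, T.sides v = T.side v s(v, c) ::ₘ R ∧ T.sides c = (T.side v s(v, c))ᶜ ::ₘ R := by
  obtain ⟨R, hR⟩ := Multiset.exists_cons_of_mem (s := T.G.edgeFinset.val) (a := s(v, c))
    (by simpa using hvc)
  have hnotin : s(v, c) ∉ R := (Multiset.nodup_cons.mp (hR ▸ T.G.edgeFinset.nodup)).1
  refine ⟨R.map (T.side v), by rw [sides, hR, Multiset.map_cons], ?_⟩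
  rw [sides, hR, Multiset.map_cons, ← side_right_eq_compl hvc]
  refine congrArg _ (Multiset.map_congr rfl fun e he => ?_)
  have hstep : (T.G.deleteEdges {e}).Adj v c := by
    simpa [hvc] using fun h : s(v, c) = e => hnotin (h ▸ he)
  exact side_eq_of_reachable hstep.reachable.symm

lemma exists_adj_side_subset {v : T.V} {s : Finset X} (hs : s ∈ T.sides v) :
    ∃ c, T.G.Adj v c ∧ T.side v s(v, c) ⊆ s := by
  obtain ⟨e, he, rfl⟩ := Multiset.mem_map.mp hs
  obtain ⟨a, b, rfl, hvb⟩ :=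
    T.isTree.exists_eq_mk_not_reachable_deleteEdges (by simpa using he) v
  obtain ⟨c, hvc, hcb⟩ := T.isTree.isAcyclic.exists_adj_not_reachable_deleteEdges
    (T.isTree.connected v b) (by rintro rfl; exact hvb .rfl)
  refine ⟨c, hvc, fun x hx => by_contra fun hxs => ?_⟩
  obtain ⟨p, hp⟩ := (T.isTree.connected v (T.lab x)).some.toPath
  have hb : b ∈ p.support := p.snd_mem_support_of_mem_edges
    (p.mem_edges_of_not_reachable_deleteEdges (by simpa using hxs))
  exact T.isTree.isAcyclic.not_reachable_deleteEdges_of_mem_support hp hb hcb (by simpa using hx)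

lemma dist_lab_eq_card_filter_sides (v : T.V) (x : X) :
    T.G.dist v (T.lab x) = Multiset.card ((T.sides v).filter (x ∉ ·)) := by
  rw [T.isTree.dist_eq_card_filter_not_reachable, Finset.card_def, Finset.filter_val, sides,
    Multiset.filter_map, Multiset.card_map]
  congr 2
  ext e
  simp

end WeakXTree

namespace Finset

lemma pair_compl_eq_pair_compl_iff {α : Type*} [BooleanAlgebra α] [DecidableEq α] {s A : α} :
    ({s, sᶜ} : Finset α) = {A, Aᶜ} ↔ s = A ∨ sᶜ = A := by
  refine ⟨fun h => ?_, ?_⟩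
  · have hA : A ∈ ({s, sᶜ} : Finset α) := h ▸ mem_insert_self A {Aᶜ}
    simpa [eq_comm] using hA
  · rintro (rfl | rfl)
    · rfl
    · rw [compl_compl, pair_comm]

end Finset

namespace Multiset

variable {α : Type*} [DecidableEq α]

lemma count_map_pair_compl [BooleanAlgebra α] [Nontrivial α] (m : Multiset α) (s : α) :
    (m.map fun A => ({A, Aᶜ} : Finset α)).count {s, sᶜ} = m.count s + m.count sᶜ := by
  induction m using Multiset.induction_on with
  | empty => simp
  | cons A m ih =>
    have hs : s ≠ sᶜ := ne_compl_self
    simp only [map_cons, count_cons, ih, Finset.pair_compl_eq_pair_compl_iff]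
    by_cases h : s = A
    · subst h
      simp [hs.symm]
      omega
    · by_cases h' : sᶜ = A <;> simp [h, h']
      omega

lemma cons_inter_of_count_le {a : α} {s t : Multiset α} (h : t.count a ≤ s.count a) :
    (a ::ₘ s) ∩ t = s ∩ t := by
  ext b
  by_cases hb : b = a
  · subst hb; simp only [count_inter, count_cons_self]; omega
  · simp [count_inter, count_cons_of_ne hb]

lemma cons_inter_of_count_lt {a : α} {s t : Multiset α} (h : s.count a < t.count a) :
    (a ::ₘ s) ∩ t = a ::ₘ (s ∩ t) := by
  ext b
  by_cases hb : b = a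
  · subst hb; simp only [count_inter, count_cons_self]; omega
  · simp [count_inter, count_cons_of_ne hb]

end Multiset

def partCompls (P : Multiset (Finset (Finset X))) : Multiset (Finset X) :=
  P.bind fun π => π.val.map compl

lemma mem_partCompls {P : Multiset (Finset (Finset X))} {s : Finset X} :
    s ∈ partCompls P ↔ ∃ π ∈ P, sᶜ ∈ π := by
  simp only [partCompls, Multiset.mem_bind, Multiset.mem_map, Finset.mem_val]
  refine exists_congr fun π =>
    and_congr_right fun _ => ⟨?_, fun h => ⟨sᶜ, h, compl_compl s⟩⟩
  rintro ⟨A, hA, rfl⟩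
  rwa [compl_compl]

lemma systemSplits_eq_map_partCompls (P : Multiset (Finset (Finset X))) :
    systemSplits P = (partCompls P).map fun A => {A, Aᶜ} := by
  simp only [systemSplits, partitionSplits, partCompls, Multiset.map_bind, Multiset.map_map]
  refine Multiset.bind_congr fun π _ => Multiset.map_congr rfl fun A _ => ?_
  simp [Finset.pair_comm]

lemma IsPartitionSystem.card_filter_partCompls {P : Multiset (Finset (Finset X))}
    (hP : IsPartitionSystem P) (x : X) :
    Multiset.card ((partCompls P).filter (x ∉ ·)) = Multiset.card P := by
  rw [partCompls, Multiset.filter_bind, Multiset.card_bind]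
  refine (congrArg Multiset.sum (Multiset.map_congr rfl fun π hπ => ?_)).trans
    (show (P.map fun _ => 1).sum = Multiset.card P by simp)
  have hx : (π.filter (x ∈ ·)).card = 1 := by
    simpa [Finset.card_eq_one_iff_existsUnique] using (hP π hπ).1.2 x
  rw [← hx, Function.comp_apply, Multiset.filter_map, Multiset.card_map]
  simp [Finset.card_def]

lemma IsPartitionSystem.compl_nonempty {P : Multiset (Finset (Finset X))}
    (hP : IsPartitionSystem P) {π : Finset (Finset X)} (hπ : π ∈ P) {A : Finset X}
    (hA : A ∈ π) : Aᶜ.Nonempty := by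
  obtain ⟨⟨hne, huniq⟩, hcard⟩ := hP π hπ
  obtain ⟨B, hB, hBA⟩ := Finset.exists_mem_ne hcard A
  obtain ⟨x, hx⟩ := hne B hB
  refine ⟨x, Finset.mem_compl.mpr fun hxA => hBA ?_⟩
  exact (huniq x).unique ⟨hB, hx⟩ ⟨hA, hxA⟩

/-- The other two alternatives of the hierarchy, `A ⊆ B` and `B ⊆ A`, would make `B` or `A` all
of `X`. -/
lemma Hierarchical.eq_compl_of_compl_subset {P : Multiset (Finset (Finset X))}
    (hP : IsPartitionSystem P) (hh : Hierarchical P) {π₁ π₂ : Finset (Finset X)}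
    (hπ₁ : π₁ ∈ P) (hπ₂ : π₂ ∈ P) {A B : Finset X} (hA : A ∈ π₁) (hB : B ∈ π₂)
    (hAB : Aᶜ ⊆ B) : B = Aᶜ := by
  rcases hh π₁ hπ₁ π₂ hπ₂ A hA B hB with h | h | h
  · refine Finset.Subset.antisymm ?_ hAB
    exact Finset.subset_compl_iff_disjoint_left.mpr (Finset.disjoint_iff_inter_eq_empty.mpr h)
  · obtain ⟨y, hy⟩ := hP.compl_nonempty hπ₂ hB
    have hAB' : A ⊆ B := h ▸ Finset.inter_subset_right
    by_cases hyA : y ∈ A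
    exacts [absurd (hAB' hyA) (Finset.mem_compl.mp hy),
      absurd (hAB (Finset.mem_compl.mpr hyA)) (Finset.mem_compl.mp hy)]
  · obtain ⟨y, hy⟩ := hP.compl_nonempty hπ₁ hA
    have hBA : B ⊆ A := h ▸ Finset.inter_subset_left
    exact absurd (hBA (hAB hy)) (Finset.mem_compl.mp hy)

namespace WeakXTree

variable {T : WeakXTree X} {P : Multiset (Finset (Finset X))}

lemma map_sides_eq_map_partCompls (hT : T.splits = systemSplits P) (v : T.V) :
    (T.sides v).map (fun A => ({A, Aᶜ} : Finset (Finset X))) =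
      (partCompls P).map fun A => {A, Aᶜ} := by
  rw [← splits_eq_map_sides, hT, systemSplits_eq_map_partCompls]

lemma card_sides (hT : T.splits = systemSplits P) (v : T.V) :
    Multiset.card (T.sides v) = Multiset.card (partCompls P) := by
  simpa using congrArg Multiset.card (map_sides_eq_map_partCompls hT v)

lemma count_sides_add_count_compl [Nonempty X] (hT : T.splits = systemSplits P) (v : T.V)
    (s : Finset X) : (T.sides v).count s + (T.sides v).count sᶜ =
      (partCompls P).count s + (partCompls P).count sᶜ := by
  rw [← Multiset.count_map_pair_compl, ← Multiset.count_map_pair_compl,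
    map_sides_eq_map_partCompls hT]

lemma exists_adj_count_partCompls_lt [Nonempty X] (hP : IsPartitionSystem P)
    (hh : Hierarchical P) (hT : T.splits = systemSplits P) {v : T.V} {s : Finset X}
    (hs : (partCompls P).count s < (T.sides v).count s) :
    ∃ c, T.G.Adj v c ∧
      (partCompls P).count (T.side v s(v, c)) < (T.sides v).count (T.side v s(v, c)) := by
  obtain ⟨c, hvc, hts⟩ :=
    exists_adj_side_subset (Multiset.count_pos.mp (Nat.zero_lt_of_lt hs))
  -- `t ⊆ s`; were `t` not over-represented, `tᶜ ⊇ sᶜ` would be a part, while `s` is one.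
  refine ⟨c, hvc, not_le.mp fun hle => ?_⟩
  set t := T.side v s(v, c)
  have ht : 0 < (T.sides v).count t :=
    Multiset.count_pos.mpr (Multiset.mem_map_of_mem _ (by simpa using hvc))
  have hsc : sᶜ ∈ partCompls P := by
    have := count_sides_add_count_compl hT v s
    exact Multiset.count_pos.mp (by omega)
  obtain ⟨π₁, hπ₁, hA⟩ := mem_partCompls.mp hsc
  obtain ⟨π₂, hπ₂, hB⟩ := mem_partCompls.mp (Multiset.count_pos.mp (ht.trans_le hle))
  rw [compl_compl] at hA
  have hteq : t = s := compl_injective <|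
    hh.eq_compl_of_compl_subset hP hπ₁ hπ₂ hA hB (Finset.compl_subset_compl.mpr hts)
  rw [hteq] at hle
  omega

lemma card_inter_partCompls_lt_of_adj [Nonempty X] (hT : T.splits = systemSplits P)
    {v c : T.V} (hvc : T.G.Adj v c)
    (ht : (partCompls P).count (T.side v s(v, c)) < (T.sides v).count (T.side v s(v, c))) :
    Multiset.card (T.sides v ∩ partCompls P) < Multiset.card (T.sides c ∩ partCompls P) := by
  obtain ⟨R, hv, hc⟩ := sides_eq_cons hvc
  set t := T.side v s(v, c)
  have hcount := count_sides_add_count_compl hT v t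
  rw [hv, Multiset.count_cons_self, Multiset.count_cons_of_ne (ne_compl_self).symm] at hcount
  rw [hv, Multiset.count_cons_self] at ht
  rw [hv, hc, Multiset.cons_inter_of_count_le (by omega),
    Multiset.cons_inter_of_count_lt (by omega), Multiset.card_cons]
  exact Nat.lt_succ_self _

lemma exists_sides_eq_partCompls [Nonempty X] (hP : IsPartitionSystem P) (hh : Hierarchical P)
    (hT : T.splits = systemSplits P) : ∃ ρ, T.sides ρ = partCompls P := by
  have : Nonempty T.V := T.isTree.connected.nonempty
  obtain ⟨ρ, hρ⟩ := Finite.exists_max fun v => Multiset.card (T.sides v ∩ partCompls P)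
  refine ⟨ρ, by_contra fun hne => ?_⟩
  obtain ⟨s, hs⟩ : ∃ s, (partCompls P).count s < (T.sides ρ).count s := by
    by_contra! hle
    exact hne (Multiset.eq_of_le_of_card_le (Multiset.le_iff_count.mpr hle)
      (card_sides hT ρ).ge)
  obtain ⟨c, hρc, ht⟩ := exists_adj_count_partCompls_lt hP hh hT hs
  exact (card_inter_partCompls_lt_of_adj hT hρc ht).not_ge (hρ c)

end WeakXTree

/-- if `Π` is a hierarchical partition system, then `T_Π` has a
vertex `ρ` with `d(ρ, u) = |Π|` for every leaf `u`. -/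
theorem stmt_16 {X : Type} [Fintype X] [DecidableEq X] (hX : 2 ≤ Fintype.card X)
    (P : Multiset (Finset (Finset X))) (hP : IsPartitionSystem P)
    (hh : Hierarchical P)
    (T : WeakXTree X) (hT : T.splits = systemSplits P) :
    ∃ ρ : T.V, ∀ u : T.V, T.IsLeaf u → T.G.dist ρ u = Multiset.card P := by
  have : Nonempty X := Fintype.card_pos_iff.mp (by omega)
  obtain ⟨ρ, hρ⟩ := T.exists_sides_eq_partCompls hP hh hT
  refine ⟨ρ, fun u hu => ?_⟩
  obtain ⟨x, rfl⟩ := T.leaf_labelled u hu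
  rw [T.dist_lab_eq_card_filter_sides, hρ, hP.card_filter_partCompls]
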